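/- arXiv:1703.07293 — 4 statements merged into one kernel-verified Lean document; each statement's English description precedes it below -/
import Mathlib

section
/- Let v be a C^1 solution of the steady incompressible Euler equations v·∇v + ∇p = 0, div v = 0 in R^2. Then v is a shear flow (everywhere parallel to some fixed unit vector) if and only if the pressure p is constant. -/
/-!
If `v = c • e`, incompressibility says `∂ₑc = 0`, so the transport term `(v·∇)v = c (∂ₑc) e`
vanishes and `∇p = 0`. Conversely, if `p` is constant then `(v·∇)v = 0`, and Grönwall's
inequality shows that `v` is constant along each straight line `x + t v(x)`. In the plane two
such lines with non-parallel directions meet, and at the intersection `v` would take both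
values; hence all values of `v` are parallel.
-/

open Real Set Filter MeasureTheory

noncomputable section

/-- The Euclidean plane. -/
abbrev V2 : Type := EuclideanSpace ℝ (Fin 2)

/-- Build a point of the plane from two coordinates. -/
def mk2 (a b : ℝ) : V2 := (WithLp.equiv 2 (Fin 2 → ℝ)).symm ![a, b]

/-- Partial derivative of a scalar function in direction `i`. -/
def pd (i : Fin 2) (f : V2 → ℝ) (x : V2) : ℝ := fderiv ℝ f x (EuclideanSpace.single i 1)

/-- Partial derivative of a vector field in direction `i`. -/
def pdv (i : Fin 2) (v : V2 → V2) (x : V2) : V2 := fderiv ℝ v x (EuclideanSpace.single i 1)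

/-- The steady incompressible Euler equations `v·∇v + ∇p = 0`, `div v = 0` in the plane. -/
def IsEuler (v : V2 → V2) (p : V2 → ℝ) : Prop :=
  (∀ x, (v x 0) • pdv 0 v x + (v x 1) • pdv 1 v x + gradient p x = 0) ∧
  (∀ x, pdv 0 v x 0 + pdv 1 v x 1 = 0)

/-- The line through two points of the plane. -/
def lineThrough (x y : V2) : Set V2 := {z | ∃ t : ℝ, z = x + t • (y - x)}

lemma ContinuousLinearMap.apply_eq_coord_smul_add {F : Type*} [NormedAddCommGroup F]
    [NormedSpace ℝ F] (L : V2 →L[ℝ] F) (w : V2) :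
    L w = w 0 • L (EuclideanSpace.single 0 1) + w 1 • L (EuclideanSpace.single 1 1) := by
  have hw : w = w 0 • EuclideanSpace.single (0 : Fin 2) (1 : ℝ) +
      w 1 • EuclideanSpace.single 1 1 := by
    ext i; fin_cases i <;> simp
  conv_lhs => rw [hw]
  rw [map_add, map_smul, map_smul]

lemma IsEuler.fderiv_apply_self_add_gradient {v : V2 → V2} {p : V2 → ℝ} (h : IsEuler v p)
    (x : V2) : fderiv ℝ v x (v x) + gradient p x = 0 := by
  rw [(fderiv ℝ v x).apply_eq_coord_smul_add]
  exact h.1 x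

lemma IsEuler.gradient_eq_zero_of_eq_smul_const {v : V2 → V2} {p : V2 → ℝ} {c : V2 → ℝ}
    {e : V2} (h : IsEuler v p) (hc : Differentiable ℝ c) (hv : ∀ y, v y = c y • e) (x : V2) :
    gradient p x = 0 := by
  have hDv : fderiv ℝ v x = (fderiv ℝ c x).smulRight e := by
    rw [funext hv]; exact fderiv_smul_const (hc x) e
  have hdiv : fderiv ℝ c x e = 0 := by
    have h2 := h.2 x
    simp only [pdv, hDv, ContinuousLinearMap.smulRight_apply, PiLp.smul_apply, smul_eq_mul] at h2
    rw [(fderiv ℝ c x).apply_eq_coord_smul_add, smul_eq_mul, smul_eq_mul, ← h2]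
    ring
  have htransport : fderiv ℝ v x (v x) = 0 := by
    rw [hDv, ContinuousLinearMap.smulRight_apply, hv x, map_smul, hdiv, smul_zero, zero_smul]
  simpa [htransport] using h.fderiv_apply_self_add_gradient x

section Streamlines

variable {E : Type*} [NormedAddCommGroup E] [NormedSpace ℝ E]

lemma apply_add_smul_self_of_fderiv_apply_self_eq_zero_of_nonneg {f : E → E}
    (hf : ContDiff ℝ 1 f) (htransport : ∀ x, fderiv ℝ f x (f x) = 0) (x : E) {T : ℝ}
    (hT : 0 ≤ T) : f (x + T • f x) = f x := by
  set γ : ℝ → E := fun s => x + s • f x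
  set φ : ℝ → E := fun s => f (γ s) - f x
  have hγ : Continuous γ := by fun_prop
  have hdf : Differentiable ℝ f := hf.differentiable one_ne_zero
  have hφ : ∀ s, HasDerivAt φ (fderiv ℝ f (γ s) (f x)) s := fun s =>
    ((hdf (γ s)).hasFDerivAt.comp_hasDerivAt s
      (((hasDerivAt_id s).smul_const (f x)).const_add x)).sub_const (f x)
      |>.congr_deriv (by rw [one_smul])
  obtain ⟨s₀, -, hs₀⟩ := isCompact_Icc.exists_isMaxOn (nonempty_Icc.2 hT)
    ((hf.continuous_fderiv one_ne_zero).comp hγ).norm.continuousOn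
  -- `f x = f (γ s) - φ s` and `fderiv ℝ f (γ s)` kills `f (γ s)`, so `‖φ'‖ ≤ K ‖φ‖`
  -- and Grönwall's inequality forces `φ = 0`.
  have hbound : ∀ s ∈ Ico 0 T, ‖fderiv ℝ f (γ s) (f x)‖ ≤ ‖fderiv ℝ f (γ s₀)‖ * ‖φ s‖ + 0 := by
    intro s hs
    have hfx : f x = f (γ s) - φ s := by simp [φ]
    rw [add_zero, hfx, map_sub, htransport, zero_sub, norm_neg]
    exact ((fderiv ℝ f (γ s)).le_opNorm _).trans
      (mul_le_mul_of_nonneg_right (hs₀ (Ico_subset_Icc_self hs)) (norm_nonneg _))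
  have hT' := norm_le_gronwallBound_of_norm_deriv_right_le
    (fun s _ => (hφ s).continuousAt.continuousWithinAt) (fun s _ => (hφ s).hasDerivWithinAt)
    (δ := 0) (by simp [φ, γ]) hbound T (right_mem_Icc.2 hT)
  rw [gronwallBound_ε0_δ0] at hT'
  exact sub_eq_zero.1 (norm_le_zero_iff.1 hT')

lemma apply_add_smul_self_of_fderiv_apply_self_eq_zero {f : E → E} (hf : ContDiff ℝ 1 f)
    (htransport : ∀ x, fderiv ℝ f x (f x) = 0) (x : E) (t : ℝ) : f (x + t • f x) = f x := by
  rcases le_total 0 t with ht | ht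
  · exact apply_add_smul_self_of_fderiv_apply_self_eq_zero_of_nonneg hf htransport x ht
  · have hneg : ∀ y, fderiv ℝ (-f) y ((-f) y) = 0 := fun y => by
      simp [fderiv_neg, htransport]
    simpa [smul_neg, ← neg_smul] using
      apply_add_smul_self_of_fderiv_apply_self_eq_zero_of_nonneg hf.neg hneg x (neg_nonneg.2 ht)

end Streamlines

lemma exists_eq_smul_of_apply_add_smul_self {E : Type*} [AddCommGroup E] [Module ℝ E]
    (hE : Module.finrank ℝ E = 2) {f : E → E} (hf : ∀ x (t : ℝ), f (x + t • f x) = f x) {x y : E}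
    (hx : f x ≠ 0) : ∃ c : ℝ, f y = c • f x := by
  by_contra! hxy
  have hli : LinearIndependent ℝ ![f y, f x] :=
    linearIndependent_fin2.2 ⟨hx, fun a ha => hxy a ha.symm⟩
  have hspan : x - y ∈ Submodule.span ℝ {f y, f x} := by
    have := hli.span_eq_top_of_card_eq_finrank (by simp [hE])
    simp [Matrix.range_cons, Matrix.range_empty, Set.pair_comm] at this
    simp [this]
  obtain ⟨a, b, hab⟩ := Submodule.mem_span_pair.1 hspan
  have hmeet : y + a • f y = x + (-b) • f x := by
    rw [neg_smul, ← sub_eq_add_neg, eq_sub_iff_add_eq, add_assoc, hab]; abel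
  exact hxy 1 (by rw [one_smul, ← hf y a, hmeet, hf])

lemma exists_unit_forall_eq_smul {E : Type*} [NormedAddCommGroup E] [NormedSpace ℝ E]
    [Nontrivial E] {f : E → E} (hf : ∀ x y, f x ≠ 0 → ∃ c : ℝ, f y = c • f x) :
    ∃ e : E, ‖e‖ = 1 ∧ ∀ x, ∃ c : ℝ, f x = c • e := by
  by_cases hzero : ∀ x, f x = 0
  · obtain ⟨e, he⟩ := exists_norm_eq E zero_le_one
    exact ⟨e, he, fun x => ⟨0, by simp [hzero x]⟩⟩
  obtain ⟨x₀, hx₀⟩ := not_forall.1 hzero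
  refine ⟨‖f x₀‖⁻¹ • f x₀, by simp [norm_smul, hx₀], fun x => ?_⟩
  obtain ⟨c, hc⟩ := hf x₀ x hx₀
  exact ⟨c * ‖f x₀‖, by rw [hc, smul_smul, mul_assoc, mul_inv_cancel₀ (by simpa using hx₀),
    mul_one]⟩

theorem stmt_1 (v : V2 → V2) (p : V2 → ℝ) (hv : ContDiff ℝ 1 v) (hp : ContDiff ℝ 1 p)
    (h : IsEuler v p) :
    (∃ e : V2, ‖e‖ = 1 ∧ ∀ x, ∃ c : ℝ, v x = c • e) ↔ (∃ c : ℝ, ∀ x, p x = c) := by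
  constructor
  · rintro ⟨e, he, hve⟩
    have hv_eq : ∀ y, v y = inner ℝ e (v y) • e := fun y => by
      obtain ⟨c, hc⟩ := hve y
      rw [hc, inner_smul_right, real_inner_self_eq_norm_sq, he, one_pow, mul_one]
    have hgrad := h.gradient_eq_zero_of_eq_smul_const
      ((innerSL ℝ e).differentiable.comp (hv.differentiable one_ne_zero)) hv_eq
    have hDp : ∀ x, fderiv ℝ p x = 0 := fun x => by
      simpa [gradient] using hgrad x
    exact ⟨p 0, fun x => is_const_of_fderiv_eq_zero (hp.differentiable one_ne_zero) hDp x 0⟩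
  · rintro ⟨c, hc⟩
    have htransport : ∀ x, fderiv ℝ v x (v x) = 0 := fun x => by
      simpa [funext hc, gradient_fun_const] using h.fderiv_apply_self_add_gradient x
    exact exists_unit_forall_eq_smul fun x y hx =>
      exists_eq_smul_of_apply_add_smul_self finrank_euclideanSpace_fin
        (apply_add_smul_self_of_fderiv_apply_self_eq_zero hv htransport) hx
end
end

section
/- The vector field v(x1, x2) = (-cosh(x1), x2 sinh(x1)) together with the pressure p(x1, x2) = -cosh(2x1)/4 + x2²/2 solves the steady incompressible Euler equations v·∇v + ∇p = 0, div v = 0 in R^2; moreover |v(x)| ≥ 1 for all x ∈ R^2, but v is unbounded. -/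
open Real Set Filter MeasureTheory

noncomputable section

/-! In components the Euler system for `v = (f, g)` reduces to scalar identities between partial
derivatives. For `f = -cosh x₁`, `g = x₂ sinh x₁` these are `cosh x₁ sinh x₁ = sinh (2x₁) / 2`
and `x₂ (cosh² x₁ - sinh² x₁ - 1) = 0` for the momentum equation, and `-sinh x₁ + sinh x₁ = 0`
for the divergence. The speed is at least `cosh x₁ ≥ 1`, and equals `cosh x₁` on the axis
`x₂ = 0`, so it is unbounded. -/

theorem gradient_apply_eq_fderiv_single {ι : Type*} [Fintype ι] [DecidableEq ι]
    (f : EuclideanSpace ℝ ι → ℝ) (x : EuclideanSpace ℝ ι) (i : ι) :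
    gradient f x i = fderiv ℝ f x (EuclideanSpace.single i 1) := by
  rw [← toDual_gradient (𝕜 := ℝ), InnerProductSpace.toDual_apply_apply,
    EuclideanSpace.inner_single_right]
  simp

theorem fderiv_euclidean_apply {ι E : Type*} [Fintype ι] [NormedAddCommGroup E] [NormedSpace ℝ E]
    {v : E → EuclideanSpace ℝ ι} {x : E} (hv : DifferentiableAt ℝ v x) (u : E) (j : ι) :
    fderiv ℝ v x u j = fderiv ℝ (fun y => v y j) x u := by
  rw [show (fun y => v y j) = (fun w : EuclideanSpace ℝ ι => w j) ∘ v from rfl,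
    ((PiLp.hasFDerivAt_apply 2 (v x) j).comp x hv.hasFDerivAt).fderiv]
  rfl

@[simp] lemma mk2_apply_zero (a b : ℝ) : mk2 a b 0 = a := rfl
@[simp] lemma mk2_apply_one (a b : ℝ) : mk2 a b 1 = b := rfl

lemma norm_mk2 (a b : ℝ) : ‖mk2 a b‖ = √(a ^ 2 + b ^ 2) := by
  simp [EuclideanSpace.norm_eq, Fin.sum_univ_two]

lemma HasFDerivAt.pd_eq {f : V2 → ℝ} {f' : V2 →L[ℝ] ℝ} {x : V2} (hf : HasFDerivAt f f' x)
    (i : Fin 2) : pd i f x = f' (EuclideanSpace.single i 1) := by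
  rw [pd, hf.fderiv]

lemma gradient_apply_eq_pd (p : V2 → ℝ) (x : V2) (i : Fin 2) : gradient p x i = pd i p x :=
  gradient_apply_eq_fderiv_single p x i

lemma pdv_mk2_apply {f g : V2 → ℝ} {x : V2} (hf : DifferentiableAt ℝ f x)
    (hg : DifferentiableAt ℝ g x) (i : Fin 2) :
    pdv i (fun y => mk2 (f y) (g y)) x = mk2 (pd i f x) (pd i g x) := by
  have hv : DifferentiableAt ℝ (fun y => mk2 (f y) (g y)) x := by
    rw [differentiableAt_euclidean, Fin.forall_fin_two]
    exact ⟨hf, hg⟩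
  ext j
  fin_cases j
  · exact fderiv_euclidean_apply hv _ 0
  · exact fderiv_euclidean_apply hv _ 1

theorem isEuler_mk2 {f g p : V2 → ℝ} (hf : Differentiable ℝ f) (hg : Differentiable ℝ g)
    (hmom₀ : ∀ x, f x * pd 0 f x + g x * pd 1 f x + pd 0 p x = 0)
    (hmom₁ : ∀ x, f x * pd 0 g x + g x * pd 1 g x + pd 1 p x = 0)
    (hdiv : ∀ x, pd 0 f x + pd 1 g x = 0) :
    IsEuler (fun x => mk2 (f x) (g x)) p := by
  simp only [IsEuler, pdv_mk2_apply (hf _) (hg _), mk2_apply_zero, mk2_apply_one]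
  refine ⟨fun x => ?_, hdiv⟩
  ext j
  fin_cases j
  · simpa [gradient_apply_eq_pd] using hmom₀ x
  · simpa [gradient_apply_eq_pd] using hmom₁ x

lemma Real.tendsto_cosh_atTop : Tendsto cosh atTop atTop := by
  refine tendsto_atTop_mono (fun x => ?_) (tendsto_exp_atTop.atTop_div_const two_pos)
  rw [cosh_eq]
  gcongr
  exact le_add_of_nonneg_right (exp_pos _).le

theorem stmt_3 :
    IsEuler (fun x => mk2 (-Real.cosh (x 0)) (x 1 * Real.sinh (x 0)))
      (fun x => -Real.cosh (2 * x 0) / 4 + (x 1) ^ 2 / 2) ∧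
    (∀ x : V2, 1 ≤ ‖mk2 (-Real.cosh (x 0)) (x 1 * Real.sinh (x 0))‖) ∧
    ¬ ∃ C : ℝ, ∀ x : V2, ‖mk2 (-Real.cosh (x 0)) (x 1 * Real.sinh (x 0))‖ ≤ C := by
  have hcoord (i : Fin 2) (x : V2) := PiLp.hasFDerivAt_apply (𝕜 := ℝ) 2 x i
  have hf (x : V2) : HasFDerivAt (fun y : V2 => -cosh (y 0)) _ x :=
    ((hasDerivAt_cosh _).comp_hasFDerivAt x (hcoord 0 x)).neg
  have hg (x : V2) : HasFDerivAt (fun y : V2 => y 1 * sinh (y 0)) _ x :=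
    (hcoord 1 x).mul ((hasDerivAt_sinh _).comp_hasFDerivAt x (hcoord 0 x))
  have hp (x : V2) : HasFDerivAt (fun y : V2 => -cosh (2 * y 0) / 4 + y 1 ^ 2 / 2) _ x :=
    (((hasDerivAt_cosh _).comp_hasFDerivAt x ((hcoord 0 x).const_mul 2)).neg.mul_const 4⁻¹).add
      (((hcoord 1 x).pow 2).mul_const 2⁻¹)
  refine ⟨isEuler_mk2 (fun x => (hf x).differentiableAt) (fun x => (hg x).differentiableAt)
    (fun x => ?_) (fun x => ?_) (fun x => ?_), fun x => ?_, ?_⟩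
  · simp only [(hf x).pd_eq, (hp x).pd_eq, neg_apply, add_apply, smul_apply, PiLp.proj_apply,
      PiLp.single_apply, smul_eq_mul, zero_ne_one, one_ne_zero, if_true, if_false]
    linear_combination (-1 / 2 : ℝ) * sinh_two_mul (x 0)
  · simp only [(hg x).pd_eq, (hp x).pd_eq, neg_apply, add_apply, smul_apply, PiLp.proj_apply,
      PiLp.single_apply, smul_eq_mul, zero_ne_one, one_ne_zero, if_true, if_false]
    linear_combination -x 1 * cosh_sq (x 0)
  · simp [(hf x).pd_eq, (hg x).pd_eq]
  · rw [norm_mk2, Real.one_le_sqrt]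
    nlinarith [one_le_cosh (x 0), sq_nonneg (x 1 * sinh (x 0))]
  · rintro ⟨C, hC⟩
    obtain ⟨t, ht⟩ := (tendsto_cosh_atTop.eventually_gt_atTop C).exists
    refine (hC (mk2 t 0)).not_gt ?_
    simpa [norm_mk2, sqrt_sq (cosh_pos t).le] using ht
end
end

section
/- Let u : R^2 → R be a C^3 function with ∇u nowhere vanishing, satisfying Δu + f(u) = 0 in R^2 for some C^1 function f : R → R, and let φ be a C^2 argument of ∇u (i.e., ∇u/|∇u| = (cos φ, sin φ)). Then div(|∇u|² ∇φ) = 0 in R^2. -/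
open Real Set Filter MeasureTheory

noncomputable section

/-!
Write `∇u = ρ (cos φ, sin φ)`. Differentiating `u₁ sin φ - u₂ cos φ = 0` gives
`ρ² ∇φ = u₁ ∇u₂ - u₂ ∇u₁`, whose divergence is `u₁ Δu₂ - u₂ Δu₁`. Both partial derivatives
`uⱼ` solve the linearized equation `Δuⱼ = -f'(u) uⱼ`, so this divergence vanishes.
-/

def lap (g : V2 → ℝ) (x : V2) : ℝ := pd 0 (pd 0 g) x + pd 1 (pd 1 g) x

lemma contDiff_pd {n m : WithTop ℕ∞} {g : V2 → ℝ} (hg : ContDiff ℝ m g) (h : n + 1 ≤ m)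
    (i : Fin 2) : ContDiff ℝ n (pd i g) :=
  (hg.fderiv_right h).clm_apply contDiff_const

section PartialDerivatives

variable {g h : V2 → ℝ} {x : V2}

lemma pd_add (hg : DifferentiableAt ℝ g x) (hh : DifferentiableAt ℝ h x) (i : Fin 2) :
    pd i (fun y => g y + h y) x = pd i g x + pd i h x := by
  simp [pd, fderiv_fun_add hg hh]

lemma pd_sub (hg : DifferentiableAt ℝ g x) (hh : DifferentiableAt ℝ h x) (i : Fin 2) :
    pd i (fun y => g y - h y) x = pd i g x - pd i h x := by
  simp [pd, fderiv_fun_sub hg hh]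

lemma pd_mul (hg : DifferentiableAt ℝ g x) (hh : DifferentiableAt ℝ h x) (i : Fin 2) :
    pd i (fun y => g y * h y) x = g x * pd i h x + h x * pd i g x := by
  simp [pd, fderiv_fun_mul hg hh]

lemma pd_comp {F : ℝ → ℝ} {F' : ℝ} (hF : HasDerivAt F F' (g x)) (hg : DifferentiableAt ℝ g x)
    (i : Fin 2) : pd i (fun y => F (g y)) x = F' * pd i g x := by
  have hFg := (hF.comp_hasFDerivAt x hg.hasFDerivAt).fderiv
  simp [pd, ← Function.comp_def F g, hFg]

lemma pd_eq_zero_of_forall_eq_zero (hg : ∀ y, g y = 0) (i : Fin 2) : pd i g x = 0 := by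
  simp [pd, show g = fun _ => 0 from funext hg]

lemma pd_comm (hg : ContDiff ℝ 2 g) (i j : Fin 2) : pd i (pd j g) x = pd j (pd i g) x := by
  have hd : DifferentiableAt ℝ (fderiv ℝ g) x :=
    ((hg.fderiv_right (m := 1) le_rfl).differentiable one_ne_zero) x
  have hsecond (v w : V2) :
      fderiv ℝ (fun y => fderiv ℝ g y v) x w = fderiv ℝ (fderiv ℝ g) x w v := by
    simp [fderiv_clm_apply hd (differentiableAt_const v)]
  unfold pd
  rw [hsecond, hsecond]
  exact (hg.contDiffAt.isSymmSndFDerivAt (by simp)) _ _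

end PartialDerivatives

lemma sq_mul_pd_eq_of_polar {a b r ψ : V2 → ℝ} {x : V2} (ha : DifferentiableAt ℝ a x)
    (hb : DifferentiableAt ℝ b x) (hψ : DifferentiableAt ℝ ψ x)
    (hpolar : ∀ y, a y = r y * cos (ψ y) ∧ b y = r y * sin (ψ y)) (i : Fin 2) :
    r x ^ 2 * pd i ψ x = a x * pd i b x - b x * pd i a x := by
  have hzero : pd i (fun y => a y * sin (ψ y) - b y * cos (ψ y)) x = 0 :=
    pd_eq_zero_of_forall_eq_zero (fun y => by obtain ⟨ha, hb⟩ := hpolar y; rw [ha, hb]; ring) i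
  rw [pd_sub (ha.fun_mul hψ.sin) (hb.fun_mul hψ.cos), pd_mul ha hψ.sin, pd_mul hb hψ.cos,
    pd_comp (hasDerivAt_sin _) hψ, pd_comp (hasDerivAt_cos _) hψ] at hzero
  obtain ⟨hax, hbx⟩ := hpolar x
  rw [hax, hbx] at hzero ⊢
  linear_combination r x * hzero - r x ^ 2 * pd i ψ x * sin_sq_add_cos_sq (ψ x)

lemma pd_lap_comm {g : V2 → ℝ} (hg : ContDiff ℝ 3 g) (j : Fin 2) (x : V2) :
    pd j (lap g) x = lap (pd j g) x := by
  have hdiff (i : Fin 2) : DifferentiableAt ℝ (pd i (pd i g)) x :=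
    ((contDiff_pd (contDiff_pd (n := 2) hg (by norm_num) i) (by norm_num) i).differentiable
      one_ne_zero) x
  have hswap (i : Fin 2) : pd j (pd i (pd i g)) x = pd i (pd i (pd j g)) x := by
    rw [pd_comm (contDiff_pd hg (by norm_num) i) j i,
      funext fun y => pd_comm (hg.of_le (by norm_num)) (x := y) j i]
  change pd j (fun y => pd 0 (pd 0 g) y + pd 1 (pd 1 g) y) x = _
  rw [pd_add (hdiff 0) (hdiff 1), hswap, hswap, lap]

lemma lap_pd_eq_of_lap_add_comp_eq_zero {u : V2 → ℝ} {f : ℝ → ℝ} (hu : ContDiff ℝ 3 u)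
    (hf : Differentiable ℝ f) (heq : ∀ x, lap u x + f (u x) = 0) (j : Fin 2) (x : V2) :
    lap (pd j u) x = -deriv f (u x) * pd j u x := by
  rw [← pd_lap_comm hu, funext fun y => eq_neg_of_add_eq_zero_left (heq y),
    pd_comp (F := fun t => -f t) (hf (u x)).hasDerivAt.neg (hu.differentiable (by norm_num) x)]

lemma div_wronskian_eq {a b : V2 → ℝ} (ha : ContDiff ℝ 2 a) (hb : ContDiff ℝ 2 b) (x : V2) :
    pd 0 (fun y => a y * pd 0 b y - b y * pd 0 a y) x
      + pd 1 (fun y => a y * pd 1 b y - b y * pd 1 a y) x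
      = a x * lap b x - b x * lap a x := by
  have hd {g : V2 → ℝ} (hg : ContDiff ℝ 1 g) : DifferentiableAt ℝ g x :=
    hg.differentiable one_ne_zero x
  have hpd {g : V2 → ℝ} (hg : ContDiff ℝ 2 g) (i : Fin 2) : DifferentiableAt ℝ (pd i g) x :=
    hd (contDiff_pd hg (by norm_num) i)
  have hexpand (i : Fin 2) : pd i (fun y => a y * pd i b y - b y * pd i a y) x
      = a x * pd i (pd i b) x - b x * pd i (pd i a) x := by
    rw [pd_sub ((hd (ha.of_le (by norm_num))).fun_mul (hpd hb i))
        ((hd (hb.of_le (by norm_num))).fun_mul (hpd ha i)),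
      pd_mul (hd (ha.of_le (by norm_num))) (hpd hb i),
      pd_mul (hd (hb.of_le (by norm_num))) (hpd ha i)]
    ring
  rw [hexpand, hexpand, lap, lap]
  ring

theorem stmt_9_general (u : V2 → ℝ) (hu : ContDiff ℝ 3 u)
    (f : ℝ → ℝ) (hf : ContDiff ℝ 1 f)
    (heq : ∀ x, pd 0 (pd 0 u) x + pd 1 (pd 1 u) x + f (u x) = 0)
    (φ : V2 → ℝ) (hφ : ContDiff ℝ 2 φ)
    (harg : ∀ x, pd 0 u x = ‖gradient u x‖ * Real.cos (φ x) ∧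
                 pd 1 u x = ‖gradient u x‖ * Real.sin (φ x)) :
    ∀ x, pd 0 (fun y => ‖gradient u y‖ ^ 2 * pd 0 φ y) x
       + pd 1 (fun y => ‖gradient u y‖ ^ 2 * pd 1 φ y) x = 0 := by
  intro x
  have hu₁ (i : Fin 2) : ContDiff ℝ 2 (pd i u) := contDiff_pd hu (by norm_num) i
  have hflux (i : Fin 2) : (fun y => ‖gradient u y‖ ^ 2 * pd i φ y)
      = fun y => pd 0 u y * pd i (pd 1 u) y - pd 1 u y * pd i (pd 0 u) y :=
    funext fun y => sq_mul_pd_eq_of_polar ((hu₁ 0).differentiable (by norm_num) y)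
      ((hu₁ 1).differentiable (by norm_num) y) (hφ.differentiable (by norm_num) y) harg i
  have hlin := lap_pd_eq_of_lap_add_comp_eq_zero hu (hf.differentiable one_ne_zero) heq
  rw [hflux, hflux, div_wronskian_eq (hu₁ 0) (hu₁ 1), hlin, hlin]
  ring

theorem stmt_9 (u : V2 → ℝ) (hu : ContDiff ℝ 3 u) (hnz : ∀ x, gradient u x ≠ 0)
    (f : ℝ → ℝ) (hf : ContDiff ℝ 1 f)
    (heq : ∀ x, pd 0 (pd 0 u) x + pd 1 (pd 1 u) x + f (u x) = 0)
    (φ : V2 → ℝ) (hφ : ContDiff ℝ 2 φ)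
    (harg : ∀ x, pd 0 u x = ‖gradient u x‖ * Real.cos (φ x) ∧
                 pd 1 u x = ‖gradient u x‖ * Real.sin (φ x)) :
    ∀ x, pd 0 (fun y => ‖gradient u y‖ ^ 2 * pd 0 φ y) x
       + pd 1 (fun y => ‖gradient u y‖ ^ 2 * pd 1 φ y) x = 0 :=
  stmt_9_general u hu f hf heq φ hφ harg
end
end

section
/- Let u : R^2 → R be C^2 with η ≤ |∇u(x)| ≤ η^{-1} for all x (0 < η ≤ 1), let w = ∇^⊥u, and let φ be a C^1 argument of w (w/|w| = (cos φ, sin φ)). Fix a point x0 with osc_{B(x0,1)} φ < π/2. If σ is a gradient trajectory (σ' = ∇u(σ)) and τ1 < τ2 < τ3 ≤ τ4 are real numbers with σ(τ1) = x0, σ(τ1) ∈ (σ(τ2), σ(τ3)) (open segment), and |σ(τ1) - σ(τ4)| < η^4, then a contradiction follows; i.e., no such quadruple (τ1, τ2, τ3, τ4) exists. -/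
open Real Set Filter MeasureTheory

noncomputable section

/-! Along the trajectory `u` grows at rate at least `η²` but is `η⁻¹`-Lipschitz in space, so
`|σ τ₁ - σ τ₄| < η⁴` forces `τ₄ - τ₁ < η`; as `|σ'| ≤ η⁻¹`, the arc `σ([τ₁, τ₄])` then stays in
`B(x₀, 1)`. There the oscillation bound keeps `∇u` within an angle `π/2` of the fixed direction
`e = ∇u(x₀)/|∇u(x₀)|`, so `⟪σ, e⟫` is strictly increasing on `[τ₁, τ₄]`; hence `⟪σ τ₁, e⟫` is
smaller than both `⟪σ τ₂, e⟫` and `⟪σ τ₃, e⟫`, and `σ τ₁` cannot lie between `σ τ₂` and `σ τ₃`. -/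

open InnerProductSpace
open scoped Gradient

section GradientFlow

variable {E : Type*} [NormedAddCommGroup E] [InnerProductSpace ℝ E] [CompleteSpace E]
  {u : E → ℝ} {σ : ℝ → E}

theorem hasDerivAt_comp_of_hasDerivAt_gradient {t : ℝ} (hu : DifferentiableAt ℝ u (σ t))
    (hσ : HasDerivAt σ (∇ u (σ t)) t) : HasDerivAt (u ∘ σ) (‖∇ u (σ t)‖ ^ 2) t := by
  have h := hu.hasGradientAt.hasFDerivAt.comp_hasDerivAt t hσ
  rwa [toDual_apply_apply, real_inner_self_eq_norm_sq] at h

theorem sq_mul_sub_le_of_gradient_flow (hu : Differentiable ℝ u)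
    (hσ : ∀ t, HasDerivAt σ (∇ u (σ t)) t) {m : ℝ} (hm0 : 0 ≤ m) (hm : ∀ x, m ≤ ‖∇ u x‖)
    {s t : ℝ} (hst : s ≤ t) : m ^ 2 * (t - s) ≤ u (σ t) - u (σ s) := by
  have hderiv t := hasDerivAt_comp_of_hasDerivAt_gradient (hu (σ t)) (hσ t)
  refine mul_sub_le_image_sub_of_le_deriv (fun t => (hderiv t).differentiableAt) (fun t => ?_) hst
  rw [(hderiv t).deriv]
  exact pow_le_pow_left₀ hm0 (hm _) 2

theorem norm_sub_le_of_norm_gradient_le (hu : Differentiable ℝ u) {M : ℝ}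
    (hM : ∀ x, ‖∇ u x‖ ≤ M) (x y : E) : ‖u y - u x‖ ≤ M * ‖y - x‖ := by
  refine convex_univ.norm_image_sub_le_of_norm_fderiv_le (fun z _ => hu z) (fun z _ => ?_)
    (mem_univ x) (mem_univ y)
  rw [(hu z).hasGradientAt.hasFDerivAt.fderiv, LinearIsometryEquiv.norm_map]
  exact hM z

theorem norm_sub_le_of_gradient_flow (hσ : ∀ t, HasDerivAt σ (∇ u (σ t)) t) {M : ℝ}
    (hM : ∀ x, ‖∇ u x‖ ≤ M) {s t : ℝ} (hst : s ≤ t) : ‖σ t - σ s‖ ≤ M * (t - s) :=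
  norm_image_sub_le_of_norm_deriv_le_segment' (fun r _ => (hσ r).hasDerivWithinAt)
    (fun r _ => hM (σ r)) t ⟨hst, le_rfl⟩

theorem sub_lt_of_gradient_flow (hu : Differentiable ℝ u)
    (hσ : ∀ t, HasDerivAt σ (∇ u (σ t)) t) {η : ℝ} (hη : 0 < η)
    (hgrad : ∀ x, η ≤ ‖∇ u x‖ ∧ ‖∇ u x‖ ≤ η⁻¹) {s t : ℝ} (hst : s ≤ t)
    (hclose : ‖σ t - σ s‖ < η ^ 4) : t - s < η := by
  have h : η ^ 2 * (t - s) < η ^ 2 * η :=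
    calc η ^ 2 * (t - s) ≤ u (σ t) - u (σ s) :=
          sq_mul_sub_le_of_gradient_flow hu hσ hη.le (fun x => (hgrad x).1) hst
      _ ≤ η⁻¹ * ‖σ t - σ s‖ :=
          (le_abs_self _).trans (norm_sub_le_of_norm_gradient_le hu (fun x => (hgrad x).2) _ _)
      _ < η⁻¹ * η ^ 4 := by gcongr
      _ = η ^ 2 * η := by field_simp
  exact lt_of_mul_lt_mul_left h (by positivity)

theorem mapsTo_ball_of_gradient_flow (hσ : ∀ t, HasDerivAt σ (∇ u (σ t)) t) {η : ℝ}
    (hη : 0 < η) (hM : ∀ x, ‖∇ u x‖ ≤ η⁻¹) {s s' : ℝ} (hshort : s' - s < η) :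
    MapsTo σ (Icc s s') (Metric.ball (σ s) 1) := by
  intro t ht
  rw [Metric.mem_ball, dist_eq_norm]
  calc ‖σ t - σ s‖ ≤ η⁻¹ * (t - s) := norm_sub_le_of_gradient_flow hσ hM ht.1
    _ ≤ η⁻¹ * (s' - s) := by gcongr; exact ht.2
    _ < η⁻¹ * η := by gcongr
    _ = 1 := inv_mul_cancel₀ hη.ne'

end GradientFlow

theorem abs_sub_le_sSup_image_sub_sInf_image {α : Type*} {f : α → ℝ} {s : Set α}
    (hs : Bornology.IsBounded (f '' s)) {x y : α} (hx : x ∈ s) (hy : y ∈ s) :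
    |f x - f y| ≤ sSup (f '' s) - sInf (f '' s) :=
  Real.dist_le_of_mem_Icc (hs.subset_Icc_sInf_sSup (mem_image_of_mem f hx))
    (hs.subset_Icc_sInf_sSup (mem_image_of_mem f hy))

section InnerProduct

variable {E : Type*} [NormedAddCommGroup E] [InnerProductSpace ℝ E]

theorem strictMonoOn_inner_of_inner_deriv_pos {γ γ' : ℝ → E} (hγ : ∀ t, HasDerivAt γ (γ' t) t)
    (e : E) {a b : ℝ} (hpos : ∀ t ∈ Ioo a b, 0 < ⟪γ' t, e⟫_ℝ) :
    StrictMonoOn (fun t => ⟪γ t, e⟫_ℝ) (Icc a b) := by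
  have hderiv t : HasDerivAt (fun t => ⟪γ t, e⟫_ℝ) ⟪γ' t, e⟫_ℝ t :=
    (hγ t).inner ℝ (hasDerivAt_const t e) |>.congr_deriv (by simp)
  refine strictMonoOn_of_deriv_pos (convex_Icc a b)
    (fun t _ => (hderiv t).continuousAt.continuousWithinAt) fun t ht => ?_
  rw [interior_Icc] at ht
  rw [(hderiv t).deriv]
  exact hpos t ht

theorem notMem_openSegment_of_inner_lt {x y z e : E} (hy : ⟪x, e⟫_ℝ < ⟪y, e⟫_ℝ)
    (hz : ⟪x, e⟫_ℝ < ⟪z, e⟫_ℝ) : x ∉ openSegment ℝ y z := by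
  rintro ⟨a, b, ha, hb, hab, rfl⟩
  simp only [inner_add_left, real_inner_smul_left] at hy hz
  obtain rfl : a = 1 - b := by linarith
  rcases le_total ⟪y, e⟫_ℝ ⟪z, e⟫_ℝ with h | h
  · nlinarith [mul_le_mul_of_nonneg_left h hb.le]
  · nlinarith [mul_le_mul_of_nonneg_left h ha.le]

end InnerProduct

theorem inner_mk2_sin_neg_cos {v : V2} {θ : ℝ}
    (hv : -(v 1) = ‖v‖ * Real.cos θ ∧ v 0 = ‖v‖ * Real.sin θ) (α : ℝ) :
    ⟪v, mk2 (Real.sin α) (-Real.cos α)⟫_ℝ = ‖v‖ * Real.cos (θ - α) := by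
  have hv1 : v 1 = -(‖v‖ * Real.cos θ) := by linarith [hv.1]
  simp [mk2, PiLp.inner_apply, Fin.sum_univ_two, hv.2, hv1, Real.cos_sub]
  ring

theorem stmt_17_general (u : V2 → ℝ) (hu : ContDiff ℝ 2 u) (η : ℝ) (hη0 : 0 < η)
    (hgrad : ∀ x, η ≤ ‖gradient u x‖ ∧ ‖gradient u x‖ ≤ η⁻¹)
    (φ : V2 → ℝ) (hφ : ContDiff ℝ 1 φ)
    (harg : ∀ x, -(gradient u x 1) = ‖gradient u x‖ * Real.cos (φ x) ∧
                 gradient u x 0 = ‖gradient u x‖ * Real.sin (φ x))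
    (x0 : V2)
    (hosc : sSup (φ '' Metric.ball x0 1) - sInf (φ '' Metric.ball x0 1) < Real.pi / 2)
    (σ : ℝ → V2) (hσ : ∀ t, HasDerivAt σ (gradient u (σ t)) t)
    (τ1 τ2 τ3 τ4 : ℝ) (h12 : τ1 < τ2) (h23 : τ2 < τ3) (h34 : τ3 ≤ τ4)
    (hx0 : σ τ1 = x0) (hseg : σ τ1 ∈ openSegment ℝ (σ τ2) (σ τ3))
    (hclose : ‖σ τ1 - σ τ4‖ < η ^ 4) :
    False := by
  have hu' : Differentiable ℝ u := hu.differentiable (by norm_num)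
  have h14 : τ1 ≤ τ4 := by linarith
  have hshort : τ4 - τ1 < η :=
    sub_lt_of_gradient_flow hu' hσ hη0 hgrad h14 (by rwa [norm_sub_rev])
  have hball : MapsTo σ (Icc τ1 τ4) (Metric.ball x0 1) :=
    hx0 ▸ mapsTo_ball_of_gradient_flow hσ hη0 (fun x => (hgrad x).2) hshort
  have hbdd : Bornology.IsBounded (φ '' Metric.ball x0 1) :=
    ((isCompact_closedBall x0 1).image hφ.continuous).isBounded.subset
      (image_mono Metric.ball_subset_closedBall)
  set e := mk2 (Real.sin (φ x0)) (-Real.cos (φ x0))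
  have hpos : ∀ x ∈ Metric.ball x0 1, 0 < ⟪∇ u x, e⟫_ℝ := by
    intro x hx
    have hφx : |φ x - φ x0| < Real.pi / 2 :=
      (abs_sub_le_sSup_image_sub_sInf_image hbdd hx (Metric.mem_ball_self one_pos)).trans_lt hosc
    rw [inner_mk2_sin_neg_cos (harg x)]
    exact mul_pos (hη0.trans_le (hgrad x).1) (Real.cos_pos_of_mem_Ioo (abs_lt.mp hφx))
  have hmono := strictMonoOn_inner_of_inner_deriv_pos hσ e
    fun t ht => hpos (σ t) (hball (Ioo_subset_Icc_self ht))
  have hτ1 : τ1 ∈ Icc τ1 τ4 := ⟨le_rfl, h14⟩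
  exact notMem_openSegment_of_inner_lt (hmono hτ1 ⟨h12.le, by linarith⟩ h12)
    (hmono hτ1 ⟨by linarith, h34⟩ (by linarith)) hseg

theorem stmt_17 (u : V2 → ℝ) (hu : ContDiff ℝ 2 u) (η : ℝ) (hη0 : 0 < η) (hη1 : η ≤ 1)
    (hgrad : ∀ x, η ≤ ‖gradient u x‖ ∧ ‖gradient u x‖ ≤ η⁻¹)
    (φ : V2 → ℝ) (hφ : ContDiff ℝ 1 φ)
    (harg : ∀ x, -(gradient u x 1) = ‖gradient u x‖ * Real.cos (φ x) ∧
                 gradient u x 0 = ‖gradient u x‖ * Real.sin (φ x))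
    (x0 : V2)
    (hosc : sSup (φ '' Metric.ball x0 1) - sInf (φ '' Metric.ball x0 1) < Real.pi / 2)
    (σ : ℝ → V2) (hσ : ∀ t, HasDerivAt σ (gradient u (σ t)) t)
    (τ1 τ2 τ3 τ4 : ℝ) (h12 : τ1 < τ2) (h23 : τ2 < τ3) (h34 : τ3 ≤ τ4)
    (hx0 : σ τ1 = x0) (hseg : σ τ1 ∈ openSegment ℝ (σ τ2) (σ τ3))
    (hclose : ‖σ τ1 - σ τ4‖ < η ^ 4) :
    False :=
  stmt_17_general u hu η hη0 hgrad φ hφ harg x0 hosc σ hσ τ1 τ2 τ3 τ4 h12 h23 h34 hx0 hseg hclose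
end
end
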